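/- For every request sequence E = ((N_t, q_t))_{t∈[m]} with n offline nodes, the set Δ(E) of feasible load vectors contains a unique majorization-minimal element ℓ*: ℓ* ⪯ ℓ for every ℓ ∈ Δ(E). Consequently, ℓ* ∈ argmax_{ℓ∈Δ(E)} f(ℓ) for every Schur-concave f : ℝ^n_{≥0} → ℝ_{≥0} and ℓ* ∈ argmin_{ℓ∈Δ(E)} g(ℓ) for every Schur-convex g : ℝ^n_{≥0} → ℝ_{≥0}. -/

import Mathlib

open Finset MeasureTheory

/-- A request sequence with `n` offline nodes and `m` online nodes: each online
node `t` has a nonempty neighborhood `N t ⊆ [n]` and a positive quantity `q t`. -/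
structure ReqSeq (n m : ℕ) where
  N : Fin m → Finset (Fin n)
  q : Fin m → ℝ
  N_nonempty : ∀ t, (N t).Nonempty
  q_pos : ∀ t, 0 < q t

/-- `Δ(N, q)`: feasible allocations for a single online node. -/
def allocSet (n : ℕ) (N : Finset (Fin n)) (qt : ℝ) : Set (Fin n → ℝ) :=
  {x | (∀ i, 0 ≤ x i) ∧ (∀ i, i ∉ N → x i = 0) ∧ ∑ i, x i = qt}

/-- A feasible allocation trajectory on a request sequence. -/
def Feasible {n m : ℕ} (E : ReqSeq n m) (x : Fin m → Fin n → ℝ) : Prop :=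
  ∀ t, x t ∈ allocSet n (E.N t) (E.q t)

/-- `Δ(E)`: the Minkowski sum of the per-node allocation sets (feasible load vectors). -/
def loads {n m : ℕ} (E : ReqSeq n m) : Set (Fin n → ℝ) :=
  {ℓ | ∃ x, Feasible E x ∧ ℓ = ∑ t, x t}

/-- Sum of the `k` largest entries of `x`. -/
noncomputable def topSum {n : ℕ} (x : Fin n → ℝ) (k : ℕ) : ℝ :=
  sSup ((fun s : Finset (Fin n) => ∑ i ∈ s, x i) '' {s | s.card = k})

/-- `Majorizes x y` means `x ⪰ y`: equal total sums and every `k`-largest-entries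
sum of `x` dominates that of `y`. -/
def Majorizes {n : ℕ} (x y : Fin n → ℝ) : Prop :=
  (∑ i, x i = ∑ i, y i) ∧ ∀ k ≤ n, topSum y k ≤ topSum x k

/-- `f` is Schur-concave on the nonnegative orthant: `x ⪯ y → f x ≥ f y`. -/
def SchurConcave {n : ℕ} (f : (Fin n → ℝ) → ℝ) : Prop :=
  ∀ x y : Fin n → ℝ, (∀ i, 0 ≤ x i) → (∀ i, 0 ≤ y i) → Majorizes y x → f y ≤ f x

/-- `g` is Schur-convex on the nonnegative orthant: `x ⪯ y → g x ≤ g y`. -/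
def SchurConvex {n : ℕ} (g : (Fin n → ℝ) → ℝ) : Prop :=
  ∀ x y : Fin n → ℝ, (∀ i, 0 ≤ x i) → (∀ i, 0 ≤ y i) → Majorizes y x → g x ≤ g y

/-- Cumulative load strictly before online node `t`. -/
def prevLoad {n m : ℕ} (x : Fin m → Fin n → ℝ) (t : Fin m) : Fin n → ℝ :=
  fun i => ∑ s ∈ Finset.univ.filter (fun s => s < t), x s i

/-- Minimum of `v` over the neighborhood of online node `t`. -/
noncomputable def reqMinOn {n m : ℕ} (E : ReqSeq n m) (t : Fin m) (v : Fin n → ℝ) : ℝ :=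
  (E.N t).inf' (E.N_nonempty t) v

/-- `x` is the water-filling allocation trajectory on `E`: at each arrival `t`,
`x t` maximizes the minimum post-allocation load over `N t`. -/
def IsWFAlloc {n m : ℕ} (E : ReqSeq n m) (x : Fin m → Fin n → ℝ) : Prop :=
  Feasible E x ∧
  ∀ t, ∀ y ∈ allocSet n (E.N t) (E.q t),
    reqMinOn E t (fun i => y i + prevLoad x t i) ≤ reqMinOn E t (fun i => x t i + prevLoad x t i)

-- The load vector produced by water-filling (via choice; the trajectory exists and is unique).
open Classical in
noncomputable def wfLoad {n m : ℕ} (E : ReqSeq n m) : Fin n → ℝ :=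
  if h : ∃ x, IsWFAlloc E x then ∑ t, h.choose t else 0

/-- `ℓ` is the majorization-minimal element of `Δ(E)`. -/
def IsOpt {n m : ℕ} (E : ReqSeq n m) (ℓ : Fin n → ℝ) : Prop :=
  ℓ ∈ loads E ∧ ∀ ℓ' ∈ loads E, Majorizes ℓ' ℓ

-- `OPT(E)`, the majorization-minimal feasible load vector (via choice).
open Classical in
noncomputable def optLoad {n m : ℕ} (E : ReqSeq n m) : Fin n → ℝ :=
  if h : ∃ ℓ, IsOpt E ℓ then h.choose else 0

/-- A request sequence is nested if `N 1 ⊇ N 2 ⊇ ⋯ ⊇ N m`. -/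
def IsNested {n m : ℕ} (E : ReqSeq n m) : Prop :=
  ∀ s t : Fin m, s ≤ t → E.N t ⊆ E.N s

/-- `E_{n,m,q}`: request sequences with total quantity `q`. -/
def seqs (n m : ℕ) (q : ℝ) : Set (ReqSeq n m) := {E | ∑ t, E.q t = q}

/-- The harmonic-series matrix applied to a vector: `(Hℓ)(i) = Σ_{j ≤ i} ℓ(j)/(n − j + 1)`
(in 1-indexed notation). -/
noncomputable def Hvec (n : ℕ) (ℓ : Fin n → ℝ) : Fin n → ℝ :=
  fun i => ∑ j ∈ Finset.univ.filter (fun j => j ≤ i), ℓ j / ((n - (j : ℕ) : ℕ) : ℝ)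

/-- The water-filling height of online node `t`: the common post-allocation load of
the offline nodes in the support of `x t`. -/
noncomputable def height {n m : ℕ} (x : Fin m → Fin n → ℝ) (t : Fin m) : ℝ :=
  sSup {c | ∃ i, 0 < x t i ∧ c = x t i + prevLoad x t i}

/-!
Minimise the squared Euclidean norm of the load vector over the compact set of feasible
trajectories. At a minimiser `x` no online node sends load to a neighbour that is strictly more
loaded than another of its neighbours, since shifting a little load would decrease the norm. Hence
for every set `U` that is upward closed for the load `L = ∑ t, x t`, each online node putting
load on `U` has its whole neighbourhood in `U`, and no feasible load puts less mass on `U` than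
`L`. Applied to the sets `{L > t}`, this bounds the excesses `∑ i, (L i - t)⁺` by those of any
feasible `ℓ`, and these bounds give `L ⪯ ℓ`. Conversely, if `ℓ ⪯ L`, comparing the top sums
over the sets `{L > L d} ∪ {d}` gives `ℓ d ≤ L d` for all `d`, so `ℓ = L`.
-/

section TopSum
variable {n : ℕ} {x : Fin n → ℝ} {S : Finset (Fin n)} {k : ℕ} {t : ℝ}

lemma sum_le_topSum (x : Fin n → ℝ) (hS : S.card = k) : ∑ i ∈ S, x i ≤ topSum x k :=
  le_csSup (Set.toFinite _).bddAbove ⟨S, hS, rfl⟩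

lemma topSum_le {c : ℝ} (hk : k ≤ n) (h : ∀ S : Finset (Fin n), S.card = k → ∑ i ∈ S, x i ≤ c) :
    topSum x k ≤ c := by
  obtain ⟨S, -, hS⟩ := exists_subset_card_eq (s := (univ : Finset (Fin n))) (by simpa using hk)
  exact csSup_le ⟨_, S, hS, rfl⟩ (by rintro _ ⟨T, hT, rfl⟩; exact h T hT)

def excess (x : Fin n → ℝ) (t : ℝ) : ℝ := ∑ i, max (x i - t) 0

lemma sum_sub_le_excess (x : Fin n → ℝ) (S : Finset (Fin n)) (t : ℝ) :
    ∑ i ∈ S, (x i - t) ≤ excess x t :=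
  (sum_le_sum fun _ _ => le_max_left _ _).trans
    (sum_le_sum_of_subset_of_nonneg (subset_univ S) fun _ _ _ => le_max_right _ _)

lemma excess_eq_sum_sub (h₁ : ∀ i ∈ S, t ≤ x i) (h₂ : ∀ i ∉ S, x i ≤ t) :
    excess x t = ∑ i ∈ S, (x i - t) := by
  rw [excess, ← sum_subset (subset_univ S) fun i _ hi => max_eq_right (sub_nonpos.2 (h₂ i hi))]
  exact sum_congr rfl fun i hi => max_eq_left (sub_nonneg.2 (h₁ i hi))

lemma sum_eq_card_mul_add_excess (h₁ : ∀ i ∈ S, t ≤ x i) (h₂ : ∀ i ∉ S, x i ≤ t) :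
    ∑ i ∈ S, x i = S.card * t + excess x t := by
  rw [excess_eq_sum_sub h₁ h₂, sum_sub_distrib, sum_const, nsmul_eq_mul]
  ring

lemma topSum_le_mul_add_excess (hk : k ≤ n) (t : ℝ) : topSum x k ≤ k * t + excess x t :=
  topSum_le hk fun S hS => by
    have := sum_sub_le_excess x S t
    rw [sum_sub_distrib, sum_const, hS, nsmul_eq_mul] at this
    linarith

lemma topSum_card_eq_sum (h₁ : ∀ i ∈ S, t ≤ x i) (h₂ : ∀ i ∉ S, x i ≤ t) :
    topSum x S.card = ∑ i ∈ S, x i :=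
  le_antisymm
    ((topSum_le_mul_add_excess (S.card_le_univ.trans_eq (Fintype.card_fin n)) t).trans_eq
      (sum_eq_card_mul_add_excess h₁ h₂).symm)
    (sum_le_topSum x rfl)

lemma exists_separated_finset_card_eq (x : Fin n → ℝ) (hk : k ≤ n) :
    ∃ S : Finset (Fin n), S.card = k ∧ ∃ t, (∀ i ∈ S, t ≤ x i) ∧ ∀ i ∉ S, x i ≤ t := by
  induction k with
  | zero =>
    obtain ⟨t, ht⟩ := (Set.finite_range x).bddAbove
    exact ⟨∅, rfl, t, by simp, fun i _ => ht ⟨i, rfl⟩⟩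
  | succ k ih =>
    obtain ⟨S, hSk, t, h₁, h₂⟩ := ih (by omega)
    have hne : Sᶜ.Nonempty := by
      rw [← card_pos, card_compl, Fintype.card_fin]
      omega
    obtain ⟨b, hb, hmax⟩ := Sᶜ.exists_max_image x hne
    rw [mem_compl] at hb
    refine ⟨insert b S, by rw [card_insert_of_notMem hb, hSk], x b, fun i hi => ?_, fun i hi => ?_⟩
    · rcases mem_insert.1 hi with rfl | hi
      · exact le_rfl
      · exact (h₂ b hb).trans (h₁ i hi)
    · rw [mem_insert, not_or] at hi
      exact hmax i (mem_compl.2 hi.2)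

lemma majorizes_of_excess_le {y : Fin n → ℝ} (hsum : ∑ i, x i = ∑ i, y i)
    (h : ∀ t, excess y t ≤ excess x t) : Majorizes x y := by
  refine ⟨hsum, fun k hk => ?_⟩
  obtain ⟨S, rfl, t, h₁, h₂⟩ := exists_separated_finset_card_eq x hk
  calc topSum y S.card ≤ S.card * t + excess y t := topSum_le_mul_add_excess hk t
    _ ≤ S.card * t + excess x t := by linarith [h t]
    _ = topSum x S.card := by rw [topSum_card_eq_sum h₁ h₂, sum_eq_card_mul_add_excess h₁ h₂]

end TopSum

section AllocSet
variable {n : ℕ} {N : Finset (Fin n)} {q : ℝ} {v : Fin n → ℝ}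

lemma single_mem_allocSet {i : Fin n} (hi : i ∈ N) (hq : 0 ≤ q) : Pi.single i q ∈ allocSet n N q :=
  ⟨fun j => by by_cases h : j = i <;> simp [h, hq],
    fun j hj => by simp [show j ≠ i from fun h => hj (h ▸ hi)], by simp⟩

lemma isCompact_allocSet (N : Finset (Fin n)) (q : ℝ) : IsCompact (allocSet n N q) := by
  have hclosed : IsClosed (allocSet n N q) := by
    have : allocSet n N q = Set.Ici 0 ∩ (⋂ i ∈ (↑N : Set (Fin n))ᶜ, {v | v i = 0}) ∩
        {v | ∑ i, v i = q} := by
      ext v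
      simp [allocSet, Pi.le_def, and_assoc]
    rw [this]
    exact (isClosed_Ici.inter (isClosed_biInter fun i _ =>
      isClosed_eq (continuous_apply i) continuous_const)).inter
      (isClosed_eq (by fun_prop) continuous_const)
  refine (isCompact_Icc (a := 0) (b := fun _ => q)).of_isClosed_subset hclosed ?_
  rintro v ⟨hv0, -, hvq⟩
  exact ⟨hv0, fun i => hvq ▸ single_le_sum (fun j _ => hv0 j) (mem_univ i)⟩

lemma sum_eq_of_mem_allocSet (hv : v ∈ allocSet n N q) {U : Finset (Fin n)} (hNU : N ⊆ U) :
    ∑ i ∈ U, v i = q :=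
  hv.2.2 ▸ sum_subset (subset_univ U) fun i _ hi => hv.2.1 i fun hiN => hi (hNU hiN)

lemma add_transfer_mem_allocSet (hv : v ∈ allocSet n N q) {a b : Fin n} (ha : a ∈ N) (hb : b ∈ N)
    {δ : ℝ} (hδ : 0 ≤ δ) (hδa : δ ≤ v a) :
    v + Pi.single b δ - Pi.single a δ ∈ allocSet n N q := by
  obtain ⟨h0, hN, hsum⟩ := hv
  refine ⟨fun i => ?_, fun i hi => ?_, ?_⟩
  · have := h0 i
    simp only [Pi.sub_apply, Pi.add_apply, Pi.single_apply]
    split_ifs with hib hia <;> subst_vars <;> linarith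
  · have hia : i ≠ a := fun h => hi (h ▸ ha)
    have hib : i ≠ b := fun h => hi (h ▸ hb)
    simp [hia, hib, hN i hi]
  · simp [sum_add_distrib, sum_sub_distrib, hsum]

lemma sum_sq_add_transfer (L : Fin n → ℝ) {a b : Fin n} (hab : a ≠ b) (δ : ℝ) :
    ∑ i, (L + Pi.single b δ - Pi.single a δ : Fin n → ℝ) i ^ 2
      = ∑ i, L i ^ 2 + 2 * δ * (L b - L a) + 2 * δ ^ 2 := by
  have key : ∀ i, (L + Pi.single b δ - Pi.single a δ : Fin n → ℝ) i ^ 2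
      = L i ^ 2 + (Pi.single b (2 * δ * L b + δ ^ 2) : Fin n → ℝ) i
        + (Pi.single a (-2 * δ * L a + δ ^ 2) : Fin n → ℝ) i := by
    intro i
    simp only [Pi.sub_apply, Pi.add_apply, Pi.single_apply]
    split_ifs <;> subst_vars <;> first | exact absurd rfl hab | ring
  simp only [key, sum_add_distrib, sum_pi_single', mem_univ, if_true]
  ring

end AllocSet

section Loads
variable {n m : ℕ} {E : ReqSeq n m} {ℓ : Fin n → ℝ}

lemma loads_sum (hℓ : ℓ ∈ loads E) : ∑ i, ℓ i = ∑ t, E.q t := by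
  obtain ⟨x, hx, rfl⟩ := hℓ
  simp only [Finset.sum_apply]
  rw [sum_comm]
  exact sum_congr rfl fun t _ => (hx t).2.2

lemma loads_nonneg (hℓ : ℓ ∈ loads E) (i : Fin n) : 0 ≤ ℓ i := by
  obtain ⟨x, hx, rfl⟩ := hℓ
  simp only [Finset.sum_apply]
  exact sum_nonneg fun t _ => (hx t).1 i

lemma isCompact_setOf_feasible (E : ReqSeq n m) : IsCompact {x | Feasible E x} := by
  simpa [Set.pi, Feasible] using isCompact_univ_pi fun t => isCompact_allocSet (E.N t) (E.q t)

lemma exists_feasible (E : ReqSeq n m) : ∃ x, Feasible E x :=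
  ⟨fun t => Pi.single (E.N_nonempty t).choose (E.q t),
    fun t => single_mem_allocSet (E.N_nonempty t).choose_spec (E.q_pos t).le⟩

end Loads

section Balanced
variable {n m : ℕ} {E : ReqSeq n m} {x : Fin m → Fin n → ℝ}

def IsBalanced (E : ReqSeq n m) (x : Fin m → Fin n → ℝ) : Prop :=
  Feasible E x ∧ ∀ t a b, 0 < x t a → b ∈ E.N t → (∑ s, x s) a ≤ (∑ s, x s) b

lemma isBalanced_of_isMinOn (hx : Feasible E x)
    (hmin : IsMinOn (fun y => ∑ i, (∑ s, y s) i ^ 2) {y | Feasible E y} x) : IsBalanced E x := by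
  refine ⟨hx, fun t a b hpos hb => ?_⟩
  set L := ∑ s, x s
  by_contra! hlt
  have ha : a ∈ E.N t := by
    by_contra ha
    exact hpos.ne' ((hx t).2.1 a ha)
  set δ := min (x t a) ((L a - L b) / 2)
  have hδ : 0 < δ := lt_min hpos (by linarith)
  have hδL : δ ≤ (L a - L b) / 2 := min_le_right _ _
  set w : Fin n → ℝ := Pi.single b δ - Pi.single a δ
  set y : Fin m → Fin n → ℝ := x + Pi.single t w
  have hy : Feasible E y := by
    intro s
    rcases eq_or_ne s t with rfl | hs
    · simpa [y, w, add_sub_assoc] using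
        add_transfer_mem_allocSet (hx s) ha hb hδ.le (min_le_left _ _)
    · simpa [y, hs] using hx s
  have hload : ∑ s, y s = L + Pi.single b δ - Pi.single a δ := by
    simp [y, L, w, sum_add_distrib, add_sub_assoc]
  have hab : a ≠ b := by
    rintro rfl
    exact lt_irrefl _ hlt
  have hnorm : ∑ i, L i ^ 2 ≤ ∑ i, (∑ s, y s) i ^ 2 := hmin hy
  rw [hload, sum_sq_add_transfer L hab] at hnorm
  nlinarith

lemma exists_isBalanced (E : ReqSeq n m) : ∃ x, IsBalanced E x := by
  obtain ⟨x, hx, hmin⟩ := (isCompact_setOf_feasible E).exists_isMinOn (exists_feasible E)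
    (by fun_prop : Continuous fun y : Fin m → Fin n → ℝ => ∑ i, (∑ s, y s) i ^ 2).continuousOn
  exact ⟨x, isBalanced_of_isMinOn hx hmin⟩

lemma IsBalanced.sum_le_sum (hx : IsBalanced E x) {y : Fin m → Fin n → ℝ} (hy : Feasible E y)
    {U : Finset (Fin n)} (hU : ∀ a ∈ U, ∀ b, (∑ s, x s) a ≤ (∑ s, x s) b → b ∈ U) :
    ∑ i ∈ U, (∑ s, x s) i ≤ ∑ i ∈ U, (∑ s, y s) i := by
  simp only [Finset.sum_apply]
  rw [sum_comm, sum_comm (s := U)]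
  refine Finset.sum_le_sum fun s _ => ?_
  by_cases hNU : E.N s ⊆ U
  · rw [sum_eq_of_mem_allocSet (hx.1 s) hNU, sum_eq_of_mem_allocSet (hy s) hNU]
  · obtain ⟨b, hb, hbU⟩ := not_subset.1 hNU
    have hzero : ∀ a ∈ U, x s a = 0 := fun a ha => by
      by_contra hne
      exact hbU (hU a ha b (hx.2 s a b (((hx.1 s).1 a).lt_of_ne' hne) hb))
    rw [sum_eq_zero hzero]
    exact sum_nonneg fun i _ => (hy s).1 i

lemma IsBalanced.excess_le (hx : IsBalanced E x) {ℓ : Fin n → ℝ} (hℓ : ℓ ∈ loads E) (t : ℝ) :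
    excess (∑ s, x s) t ≤ excess ℓ t := by
  obtain ⟨y, hy, rfl⟩ := hℓ
  set L := ∑ s, x s
  set U := univ.filter fun i => t < L i
  have hU : ∀ a ∈ U, ∀ b, L a ≤ L b → b ∈ U := fun a ha b hab => by
    simp only [U, mem_filter, mem_univ, true_and] at ha ⊢
    exact ha.trans_le hab
  rw [excess_eq_sum_sub (S := U) (fun i hi => (mem_filter.1 hi).2.le)
    fun i hi => not_lt.1 fun h => hi (mem_filter.2 ⟨mem_univ i, h⟩)]
  calc ∑ i ∈ U, (L i - t) ≤ ∑ i ∈ U, ((∑ s, y s) i - t) := by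
        rw [sum_sub_distrib, sum_sub_distrib]
        linarith [hx.sum_le_sum hy hU]
    _ ≤ excess (∑ s, y s) t := sum_sub_le_excess _ _ _

lemma IsBalanced.isOpt (hx : IsBalanced E x) : IsOpt E (∑ s, x s) := by
  have hL : ∑ s, x s ∈ loads E := ⟨x, hx.1, rfl⟩
  exact ⟨hL, fun ℓ hℓ =>
    majorizes_of_excess_le (by rw [loads_sum hℓ, loads_sum hL]) (hx.excess_le hℓ)⟩

lemma IsBalanced.eq_of_majorizes (hx : IsBalanced E x) {ℓ : Fin n → ℝ} (hℓ : ℓ ∈ loads E)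
    (h : Majorizes (∑ s, x s) ℓ) : ℓ = ∑ s, x s := by
  obtain ⟨y, hy, rfl⟩ := hℓ
  set L := ∑ s, x s
  have hle : ∀ d, (∑ s, y s) d ≤ L d := by
    intro d
    set U := univ.filter fun i => L d < L i
    have hd : d ∉ U := by simp [U]
    have hU : ∀ a ∈ U, ∀ b, L a ≤ L b → b ∈ U := fun a ha b hab => by
      simp only [U, mem_filter, mem_univ, true_and] at ha ⊢
      exact ha.trans_le hab
    have hL : topSum L (insert d U).card = ∑ i ∈ insert d U, L i := by
      refine topSum_card_eq_sum (t := L d) (fun i hi => ?_) fun i hi => ?_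
      · rcases mem_insert.1 hi with rfl | hi
        · exact le_rfl
        · exact (mem_filter.1 hi).2.le
      · exact not_lt.1 fun h => hi (mem_insert_of_mem (mem_filter.2 ⟨mem_univ i, h⟩))
    have hy_top := sum_le_topSum (∑ s, y s) (rfl : (insert d U).card = _)
    have hmaj := h.2 _ ((insert d U).card_le_univ.trans_eq (Fintype.card_fin n))
    have hUsum := hx.sum_le_sum hy hU
    rw [sum_insert hd] at hL hy_top
    linarith
  exact funext fun d => (sum_eq_sum_iff_of_le fun i _ => hle i).1 h.1.symm d (mem_univ d)

end Balanced

/-- **Fact (Existence of a Majorization Minimal Hindsight Solution).** Every request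
sequence `E` admits a unique majorization-minimal feasible load vector `ℓ*`; consequently
`ℓ*` maximizes every Schur-concave `f` and minimizes every Schur-convex `g` over `Δ(E)`. -/
theorem opt_exists_unique (n m : ℕ) (E : ReqSeq n m) :
    ∃ ℓstar : Fin n → ℝ, IsOpt E ℓstar ∧
      (∀ ℓ' : Fin n → ℝ, IsOpt E ℓ' → ℓ' = ℓstar) ∧
      (∀ f : (Fin n → ℝ) → ℝ, SchurConcave f → ∀ ℓ ∈ loads E, f ℓ ≤ f ℓstar) ∧
      (∀ g : (Fin n → ℝ) → ℝ, SchurConvex g → ∀ ℓ ∈ loads E, g ℓstar ≤ g ℓ) := by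
  obtain ⟨x, hx⟩ := exists_isBalanced E
  have hopt := hx.isOpt
  refine ⟨∑ s, x s, hopt, fun ℓ hℓ => hx.eq_of_majorizes hℓ.1 (hℓ.2 _ hopt.1), ?_, ?_⟩
  · exact fun f hf ℓ hℓ => hf _ ℓ (loads_nonneg hopt.1) (loads_nonneg hℓ) (hopt.2 ℓ hℓ)
  · exact fun g hg ℓ hℓ => hg _ ℓ (loads_nonneg hopt.1) (loads_nonneg hℓ) (hopt.2 ℓ hℓ)
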